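/- Let μ be the uniform probability measure on [−1, 1] and let U(x) = x² − 1. Then for every δ > 0 and every ε > 0 there exists x ∈ ℝ with U(x) > 0 such that μ{w : U(x + x² w) − U(x) ≤ −δ} < ε. In other words, no constant decrement δ > 0 and constant probability ε > 0 can satisfy the variant decrease condition uniformly over all states x with U(x) > 0 for this system and variant. -/

import Mathlib

open MeasureTheory

/-- The uniform probability measure on `[-1, 1]`:
one half times Lebesgue measure restricted to `[-1, 1]`. -/
noncomputable def uniformPM : Measure ℝ :=
  (2 : ENNReal)⁻¹ • (volume.restrict (Set.Icc (-1 : ℝ) 1))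

/-!
For `x > 0` the variant can only decrease when `|1 + x w| ≤ 1`, i.e. for `w ∈ [-2/x, 0]`,
an interval of uniform probability `1/x`. Taking `x` large makes the decrease event as
unlikely as we like, whatever the required decrement `δ > 0`.
-/

lemma setOf_sq_add_sq_mul_le_sq_subset_Icc {x : ℝ} (hx : 0 < x) :
    {w : ℝ | (x + x ^ 2 * w) ^ 2 ≤ x ^ 2} ⊆ Set.Icc (-(2 / x)) 0 := by
  intro w (h : (x + x ^ 2 * w) ^ 2 ≤ x ^ 2)
  have hprod : x * w * (x * w + 2) ≤ 0 := by
    have : x ^ 2 * (x * w * (x * w + 2)) ≤ 0 := by nlinarith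
    exact nonpos_of_mul_nonpos_right this (by positivity)
  obtain ⟨hxw, hxw2⟩ : x * w ≤ 0 ∧ -2 ≤ x * w := by
    rcases mul_nonpos_iff.mp hprod with h | h <;> constructor <;> linarith
  refine ⟨?_, nonpos_of_mul_nonpos_right hxw hx⟩
  rw [neg_div', div_le_iff₀ hx]
  linarith

lemma uniformPM_le_half_volume (s : Set ℝ) : uniformPM s ≤ 2⁻¹ * volume s := by
  rw [uniformPM, Measure.smul_apply, smul_eq_mul]
  gcongr
  exact Measure.restrict_le_self

lemma uniformPM_toReal_le_of_subset_Icc {s : Set ℝ} {a b : ℝ} (hab : a ≤ b)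
    (hs : s ⊆ Set.Icc a b) : (uniformPM s).toReal ≤ (b - a) / 2 := by
  have hle : uniformPM s ≤ 2⁻¹ * ENNReal.ofReal (b - a) :=
    calc uniformPM s ≤ 2⁻¹ * volume s := uniformPM_le_half_volume s
      _ ≤ 2⁻¹ * volume (Set.Icc a b) := by gcongr
      _ = 2⁻¹ * ENNReal.ofReal (b - a) := by rw [Real.volume_Icc]
  calc (uniformPM s).toReal ≤ (2⁻¹ * ENNReal.ofReal (b - a)).toReal :=
        ENNReal.toReal_mono (by finiteness) hle
    _ = (b - a) / 2 := by
        rw [ENNReal.toReal_mul, ENNReal.toReal_inv, ENNReal.toReal_ofNat,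
          ENNReal.toReal_ofReal (by linarith)]
        ring

/-- **No constant margins for the variant of the example system.** For the system
`x_{k+1} = x_k + x_k² w_k` with uniform disturbances on `[-1,1]` and the variant
`U(x) = x² − 1`, for every `δ > 0` and `ε > 0` there is a state `x` with `U(x) > 0` whose
one-step decrease event `{w : U(x + x²w) − U(x) ≤ −δ}` has probability less than `ε`. -/
theorem no_constant_variant_margins
    (U : ℝ → ℝ) (hU : ∀ y, U y = y ^ 2 - 1) :
    ∀ δ > (0 : ℝ), ∀ ε > (0 : ℝ), ∃ x : ℝ, 0 < U x ∧
      (uniformPM {w : ℝ | U (x + x ^ 2 * w) - U x ≤ -δ}).toReal < ε := by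
  intro δ hδ ε hε
  set x : ℝ := 1 + ε⁻¹
  have hx : 1 < x := lt_add_of_pos_right 1 (inv_pos.mpr hε)
  have hx0 : 0 < x := by linarith
  refine ⟨x, by rw [hU]; nlinarith, ?_⟩
  have hsub : {w : ℝ | U (x + x ^ 2 * w) - U x ≤ -δ} ⊆ {w | (x + x ^ 2 * w) ^ 2 ≤ x ^ 2} := by
    intro w (hw : U _ - U _ ≤ -δ)
    rw [hU, hU] at hw
    exact (by linarith : (x + x ^ 2 * w) ^ 2 ≤ x ^ 2)
  calc (uniformPM {w : ℝ | U (x + x ^ 2 * w) - U x ≤ -δ}).toReal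
      ≤ (0 - -(2 / x)) / 2 := uniformPM_toReal_le_of_subset_Icc (neg_nonpos.mpr (by positivity))
        (hsub.trans (setOf_sq_add_sq_mul_le_sq_subset_Icc hx0))
    _ = 1 / x := by ring
    _ < ε := by
        rw [div_lt_iff₀ hx0]
        simp only [x, mul_add, mul_inv_cancel₀ hε.ne']
        linarith
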